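/- arXiv:1610.06394 — 7 statements merged into one kernel-verified Lean document; each statement's English description precedes it below -/
import Mathlib

section
/- Let V be a closed subspace of a separable Hilbert space H and Φ: V → V a bounded bijective operator. Define Φ̃: H → H by Φ̃(x₁ + x₂) = Φ(x₁) + ‖Φ⁻¹‖⁻¹ x₂ for x₁ ∈ V, x₂ ∈ V⊥. Then the inverse of Φ̃ is given by Φ̃⁻¹(x₁ + x₂) = Φ⁻¹(x₁) + ‖Φ⁻¹‖ x₂ for x₁ ∈ V, x₂ ∈ V⊥, and ‖Φ̃⁻¹‖ = ‖Φ⁻¹‖. -/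
open scoped InnerProductSpace
open TopologicalSpace

/-- The inverse of the extension `Φ̃` (here `T`, with pointwise inverse `Tinv`)
is given by `Φ̃⁻¹(x₁ + x₂) = Φ⁻¹ x₁ + ‖Φ⁻¹‖ x₂` for `x₁ ∈ V`, `x₂ ∈ V⊥`, and
`‖Φ̃⁻¹‖ = ‖Φ⁻¹‖`.  Here `Ψ` denotes the (bounded) inverse of `Φ`. -/
theorem stmt1 {H : Type*} [NormedAddCommGroup H] [InnerProductSpace ℂ H]
    [CompleteSpace H] [SeparableSpace H]
    (V : Submodule ℂ H) (hV : IsClosed (V : Set H))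
    (Φ Ψ : V →L[ℂ] V)
    (hΦbij : Function.Bijective Φ)
    (hΨΦ : ∀ v, Ψ (Φ v) = v) (hΦΨ : ∀ v, Φ (Ψ v) = v)
    (T Tinv : H →L[ℂ] H)
    (hT : ∀ (x₁ : V) (x₂ : Vᗮ),
      T (↑x₁ + ↑x₂) = (Φ x₁ : H) + (‖Ψ‖⁻¹ : ℝ) • (x₂ : H))
    (hTinv1 : ∀ x, Tinv (T x) = x) (hTinv2 : ∀ x, T (Tinv x) = x) :
    (∀ (x₁ : V) (x₂ : Vᗮ),
      Tinv (↑x₁ + ↑x₂) = (Ψ x₁ : H) + (‖Ψ‖ : ℝ) • (x₂ : H)) ∧ ‖Tinv‖ = ‖Ψ‖ := by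
  haveI : CompleteSpace V := hV.completeSpace_coe
  by_cases hΨ0 : ‖Ψ‖ = 0
  · -- degenerate: Ψ = 0, V trivial, H trivial
    have hVtriv : ∀ v : V, v = 0 := by
      intro v
      have h1 : Ψ v = 0 := by
        have := Ψ.le_opNorm v
        rw [hΨ0, zero_mul] at this
        exact norm_le_zero_iff.mp this
      have := hΦΨ v
      rw [h1] at this
      simpa using this.symm
    have hH0 : ∀ x : H, x = 0 := by
      intro x
      obtain ⟨x₁, hx₁, x₂, hx₂, hx⟩ := V.exists_add_mem_mem_orthogonal x
      have hTx : T x = 0 := by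
        rw [hx]
        have := hT ⟨x₁, hx₁⟩ ⟨x₂, hx₂⟩
        simp only [hΨ0, inv_zero, zero_smul, add_zero] at this
        rw [this, hVtriv (Φ ⟨x₁, hx₁⟩)]
        simp
      have := hTinv2 x
      -- x = T (Tinv x); but also Tinv x = ?
      have h2 : T x = 0 := hTx
      -- From hTinv1: Tinv (T x) = x, so Tinv 0 = x, i.e. x = Tinv 0 = 0.
      have := hTinv1 x
      rw [h2] at this
      simpa using this.symm
    constructor
    · intro x₁ x₂
      rw [hH0 (Tinv (↑x₁ + ↑x₂)), hH0 ((Ψ x₁ : H) + (‖Ψ‖ : ℝ) • (x₂ : H))]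
    · have : Tinv = 0 := by ext x; rw [hH0 x]; simp
      rw [this, hΨ0, norm_zero]
  · have hΨpos : 0 < ‖Ψ‖ := lt_of_le_of_ne Ψ.opNorm_nonneg (Ne.symm hΨ0)
    have key : ∀ (x₁ : V) (x₂ : Vᗮ),
        Tinv (↑x₁ + ↑x₂) = (Ψ x₁ : H) + (‖Ψ‖ : ℝ) • (x₂ : H) := by
      intro x₁ x₂
      have hmem : (‖Ψ‖ : ℝ) • (x₂ : H) ∈ Vᗮ := Vᗮ.smul_of_tower_mem _ x₂.2
      have hTval : T ((Ψ x₁ : H) + (‖Ψ‖ : ℝ) • (x₂ : H)) = ↑x₁ + ↑x₂ := by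
        have := hT (Ψ x₁) ⟨(‖Ψ‖ : ℝ) • (x₂ : H), hmem⟩
        simp only [Submodule.coe_mk] at this
        rw [this, hΦΨ, smul_smul, inv_mul_cancel₀ hΨ0, one_smul]
      calc Tinv (↑x₁ + ↑x₂) = Tinv (T ((Ψ x₁ : H) + (‖Ψ‖ : ℝ) • (x₂ : H))) := by rw [hTval]
        _ = _ := hTinv1 _
    refine ⟨key, le_antisymm ?_ ?_⟩
    · apply ContinuousLinearMap.opNorm_le_bound _ Ψ.opNorm_nonneg
      intro x
      obtain ⟨x₁, hx₁, x₂, hx₂, hx⟩ := V.exists_add_mem_mem_orthogonal x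
      have hTx : Tinv x = (Ψ ⟨x₁, hx₁⟩ : H) + (‖Ψ‖ : ℝ) • x₂ := by
        rw [hx]; exact key ⟨x₁, hx₁⟩ ⟨x₂, hx₂⟩
      have hinner1 : ⟪(Ψ ⟨x₁, hx₁⟩ : H), (‖Ψ‖ : ℝ) • x₂⟫_ℂ = 0 := by
        apply Submodule.inner_right_of_mem_orthogonal (Ψ ⟨x₁, hx₁⟩).2
        exact Vᗮ.smul_of_tower_mem _ hx₂
      have hinner2 : ⟪x₁, x₂⟫_ℂ = 0 :=
        Submodule.inner_right_of_mem_orthogonal hx₁ hx₂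
      have hx_sq : ‖x‖ * ‖x‖ = ‖x₁‖ * ‖x₁‖ + ‖x₂‖ * ‖x₂‖ := by
        rw [hx]; exact norm_add_sq_eq_norm_sq_add_norm_sq_of_inner_eq_zero _ _ hinner2
      have hTx_sq : ‖Tinv x‖ * ‖Tinv x‖ =
          ‖(Ψ ⟨x₁, hx₁⟩ : H)‖ * ‖(Ψ ⟨x₁, hx₁⟩ : H)‖ + (‖Ψ‖ * ‖x₂‖) * (‖Ψ‖ * ‖x₂‖) := by
        rw [hTx, norm_add_sq_eq_norm_sq_add_norm_sq_of_inner_eq_zero _ _ hinner1,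
          norm_smul, Real.norm_of_nonneg Ψ.opNorm_nonneg]
      have hΨle : ‖(Ψ ⟨x₁, hx₁⟩ : H)‖ ≤ ‖Ψ‖ * ‖x₁‖ := Ψ.le_opNorm ⟨x₁, hx₁⟩
      have hx_sq2 : (‖Ψ‖ * ‖x‖) * (‖Ψ‖ * ‖x‖) =
          (‖Ψ‖ * ‖x₁‖) * (‖Ψ‖ * ‖x₁‖) + (‖Ψ‖ * ‖x₂‖) * (‖Ψ‖ * ‖x₂‖) := by
        calc (‖Ψ‖ * ‖x‖) * (‖Ψ‖ * ‖x‖) = ‖Ψ‖ * ‖Ψ‖ * (‖x‖ * ‖x‖) := by ring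
          _ = _ := by rw [hx_sq]; ring
      have hsq : ‖Tinv x‖ * ‖Tinv x‖ ≤ (‖Ψ‖ * ‖x‖) * (‖Ψ‖ * ‖x‖) := by
        rw [hTx_sq, hx_sq2]
        have h1 : ‖(Ψ ⟨x₁, hx₁⟩ : H)‖ * ‖(Ψ ⟨x₁, hx₁⟩ : H)‖ ≤ (‖Ψ‖ * ‖x₁‖) * (‖Ψ‖ * ‖x₁‖) :=
          mul_self_le_mul_self (norm_nonneg _) hΨle
        linarith
      nlinarith [hsq, norm_nonneg (Tinv x), mul_nonneg Ψ.opNorm_nonneg (norm_nonneg x)]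
    · apply ContinuousLinearMap.opNorm_le_bound _ Tinv.opNorm_nonneg
      intro v
      have h := key v 0
      simp only [Submodule.coe_zero, add_zero, smul_zero] at h
      calc ‖Ψ v‖ = ‖Tinv ↑v‖ := by rw [h]; simp
        _ ≤ ‖Tinv‖ * ‖v‖ := by simpa using Tinv.le_opNorm (v : H)
end

section
/- Let {f_i}_{i∈I} be a Bessel sequence in a separable Hilbert space H with Bessel bound B, and let {ω_j}_{j∈I} be its R-dual of type I with respect to orthonormal bases {e_j} and {h_i}, i.e., ω_j = Σ_i ⟨f_i, e_j⟩ h_i. Then {ω_j}_{j∈I} satisfies the upper Riesz condition ‖Σ_j c_j ω_j‖² ≤ B Σ_j |c_j|² for all finite scalar sequences {c_j}. -/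
set_option maxHeartbeats 1000000

open scoped InnerProductSpace
open TopologicalSpace

/-- If `{f i}` is a Bessel sequence with bound `B` and `ω j = ∑ᵢ ⟨f i, e j⟩ h i`
is its R-dual of type I, then `‖∑ⱼ c j • ω j‖² ≤ B ∑ⱼ |c j|²` for all finite scalar
sequences `{c j}`. -/
theorem stmt4 {H : Type*} {I : Type*} [NormedAddCommGroup H] [InnerProductSpace ℂ H]
    [CompleteSpace H] [SeparableSpace H] [Countable I]
    (e h : HilbertBasis I ℂ H) (f ω : I → H) (B : ℝ)
    (hsum : ∀ g : H, Summable fun i => ‖⟪f i, g⟫_ℂ‖ ^ 2)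
    (hB : ∀ g : H, ∑' i, ‖⟪f i, g⟫_ℂ‖ ^ 2 ≤ B * ‖g‖ ^ 2)
    (hω : ∀ j, ω j = ∑' i, ⟪e j, f i⟫_ℂ • h i) :
    ∀ (s : Finset I) (c : I → ℂ),
      ‖∑ j ∈ s, c j • ω j‖ ^ 2 ≤ B * ∑ j ∈ s, ‖c j‖ ^ 2 := by
  intro s c
  classical
  set g : H := ∑ j ∈ s, (starRingEnd ℂ) (c j) • e j with hg
  -- norm of g
  have hgnorm : ‖g‖ ^ 2 = ∑ j ∈ s, ‖c j‖ ^ 2 := by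
    have h1 : (⟪g, g⟫_ℂ) = ∑ j ∈ s, ((‖c j‖ : ℂ)) ^ 2 := by
      nth_rewrite 2 [hg]
      rw [inner_sum]
      refine Finset.sum_congr rfl fun j hj => ?_
      rw [inner_smul_right, hg, e.orthonormal.inner_left_sum _ hj]
      rw [starRingEnd_self_apply, RCLike.conj_mul]
      norm_cast
    have h2 : (⟪g, g⟫_ℂ) = ((‖g‖ : ℂ)) ^ 2 := inner_self_eq_norm_sq_to_K g
    rw [h2] at h1
    have := Complex.ofReal_injective (by push_cast at h1 ⊢; exact h1 :
      ((‖g‖ ^ 2 : ℝ) : ℂ) = ((∑ j ∈ s, ‖c j‖ ^ 2 : ℝ) : ℂ))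
    exact this
  -- coefficients
  set F : I → I → ℂ := fun j i => ⟪e j, f i⟫_ℂ with hF
  have hFsum : ∀ j, Summable fun i => ‖F j i‖ ^ 2 := by
    intro j
    have := hsum (e j)
    refine this.congr fun i => ?_
    rw [hF, norm_inner_symm]
  -- summability of the series for ω j
  have hωsum : ∀ j, HasSum (fun i => F j i • h i) (ω j) := by
    intro j
    have hmem : Memℓp (F j) 2 := by
      apply memℓp_gen
      have h2 : (2 : ENNReal).toReal = 2 := by norm_num
      rw [h2]
      refine (hFsum j).congr fun i => ?_
      rw [← Real.rpow_natCast ‖F j i‖ 2]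
      norm_num
    have := h.hasSum_repr_symm ⟨F j, hmem⟩
    have h2 : HasSum (fun i => F j i • h i) (h.repr.symm ⟨F j, hmem⟩) := this
    rw [hω j]
    exact h2.summable.hasSum
  set x : H := ∑ j ∈ s, c j • ω j with hx
  -- inner products of x with the basis h
  have hhx : ∀ i, ⟪h i, x⟫_ℂ = (starRingEnd ℂ) ⟪f i, g⟫_ℂ := by
    intro i
    have hωi : ∀ j, ⟪h i, ω j⟫_ℂ = F j i := by
      intro j
      have h1 : HasSum (fun k => ⟪h i, F j k • h k⟫_ℂ) ⟪h i, ω j⟫_ℂ :=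
        (innerSL ℂ (h i)).hasSum (hωsum j)
      have h2 : HasSum (fun k => ⟪h i, F j k • h k⟫_ℂ) (F j i) := by
        have := hasSum_ite_eq i (F j i)
        refine this.congr_fun fun k => ?_
        rw [inner_smul_right, orthonormal_iff_ite.mp h.orthonormal i k]
        rcases eq_or_ne i k with rfl | hik
        · rw [if_pos rfl, if_pos rfl, mul_one]
        · rw [if_neg hik, if_neg (Ne.symm hik), mul_zero]
      exact (h2.unique h1).symm
    rw [hx, inner_sum]
    have : (starRingEnd ℂ) ⟪f i, g⟫_ℂ = ⟪g, f i⟫_ℂ := inner_conj_symm _ _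
    rw [this, hg, sum_inner]
    refine Finset.sum_congr rfl fun j hj => ?_
    rw [inner_smul_right, hωi j, inner_smul_left, starRingEnd_self_apply]
  -- Parseval
  have hpar : HasSum (fun i => ‖⟪f i, g⟫_ℂ‖ ^ 2) (‖x‖ ^ 2) := by
    have h1 : HasSum (fun i => ⟪x, h i⟫_ℂ * ⟪h i, x⟫_ℂ) ⟪x, x⟫_ℂ :=
      h.hasSum_inner_mul_inner x x
    have h2 : HasSum (fun i => (⟪x, h i⟫_ℂ * ⟪h i, x⟫_ℂ).re) (⟪x, x⟫_ℂ).re :=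
      Complex.reCLM.hasSum h1
    have h3 : (⟪x, x⟫_ℂ).re = ‖x‖ ^ 2 := by
      rw [inner_self_eq_norm_sq_to_K]
      norm_cast
    rw [h3] at h2
    refine h2.congr_fun fun i => ?_
    rw [← inner_conj_symm x (h i), hhx i, starRingEnd_self_apply, RCLike.mul_conj]
    norm_cast
  calc ‖x‖ ^ 2 = ∑' i, ‖⟪f i, g⟫_ℂ‖ ^ 2 := hpar.tsum_eq.symm
    _ ≤ B * ‖g‖ ^ 2 := hB g
    _ = B * ∑ j ∈ s, ‖c j‖ ^ 2 := by rw [hgnorm]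
end

section
/- Let {f_i}_{i∈I} be a frame for a separable Hilbert space H with frame bounds A, B, and let {ω_j}_{j∈I} be its R-dual of type I with respect to orthonormal bases {e_j} and {h_i}. Then {ω_j}_{j∈I} is a Riesz sequence with Riesz bounds A and B, i.e., A Σ_j |c_j|² ≤ ‖Σ_j c_j ω_j‖² ≤ B Σ_j |c_j|² for all finite scalar sequences {c_j}. -/
open scoped InnerProductSpace
open TopologicalSpace

/-- If `{f i}` is a frame with bounds `A, B` and `ω j = ∑ᵢ ⟨f i, e j⟩ h i` is its
R-dual of type I, then `{ω j}` is a Riesz sequence with bounds `A` and `B`: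
`A ∑ⱼ |c j|² ≤ ‖∑ⱼ c j • ω j‖² ≤ B ∑ⱼ |c j|²` for all finite scalar sequences. -/
theorem stmt5 {H : Type*} {I : Type*} [NormedAddCommGroup H] [InnerProductSpace ℂ H]
    [CompleteSpace H] [SeparableSpace H] [Countable I]
    (e h : HilbertBasis I ℂ H) (f ω : I → H) (A B : ℝ) (hA : 0 < A)
    (hsum : ∀ g : H, Summable fun i => ‖⟪f i, g⟫_ℂ‖ ^ 2)
    (hframe : ∀ g : H, A * ‖g‖ ^ 2 ≤ ∑' i, ‖⟪f i, g⟫_ℂ‖ ^ 2 ∧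
      ∑' i, ‖⟪f i, g⟫_ℂ‖ ^ 2 ≤ B * ‖g‖ ^ 2)
    (hω : ∀ j, ω j = ∑' i, ⟪e j, f i⟫_ℂ • h i) :
    ∀ (s : Finset I) (c : I → ℂ),
      A * ∑ j ∈ s, ‖c j‖ ^ 2 ≤ ‖∑ j ∈ s, c j • ω j‖ ^ 2 ∧
      ‖∑ j ∈ s, c j • ω j‖ ^ 2 ≤ B * ∑ j ∈ s, ‖c j‖ ^ 2 := by
  intro s c
  -- the coefficient sequences of the ω's are in ℓ²
  have hmem : ∀ j : I, Memℓp (fun i => ⟪e j, f i⟫_ℂ) 2 := by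
    intro j
    apply memℓp_gen
    have : Summable fun i => ‖⟪f i, e j⟫_ℂ‖ ^ 2 := hsum (e j)
    have heq : (fun i => ‖⟪e j, f i⟫_ℂ‖ ^ (2 : ENNReal).toReal) =
        fun i => ‖⟪f i, e j⟫_ℂ‖ ^ 2 := by
      funext i
      rw [norm_inner_symm]
      norm_num
    rw [heq]
    exact this
  -- `⟪h i, ω j⟫ = ⟪e j, f i⟫`
  have hinner : ∀ j i : I, ⟪h i, ω j⟫_ℂ = ⟪e j, f i⟫_ℂ := by
    intro j i
    have hCol : HasSum (fun i => (⟨fun i => ⟪e j, f i⟫_ℂ, hmem j⟩ : lp (fun _ : I => ℂ) 2) i • h i)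
        (h.repr.symm ⟨fun i => ⟪e j, f i⟫_ℂ, hmem j⟩) := h.hasSum_repr_symm _
    have : ω j = h.repr.symm ⟨fun i => ⟪e j, f i⟫_ℂ, hmem j⟩ := by
      rw [hω j, ← hCol.tsum_eq]
    rw [← h.repr_apply_apply, this, LinearIsometryEquiv.apply_symm_apply]
  set g : H := ∑ j ∈ s, (starRingEnd ℂ) (c j) • e j with hg
  -- norm of g
  have hgnorm : ‖g‖ ^ 2 = ∑ j ∈ s, ‖c j‖ ^ 2 := by
    have := e.orthonormal.orthogonalFamily.norm_sum (fun j => (starRingEnd ℂ) (c j)) s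
    simp only [LinearIsometry.toSpanSingleton_apply, RCLike.norm_conj] at this
    rw [hg, this]
  -- the key identity for the coefficients
  have hcoef : ∀ i : I, ⟪h i, ∑ j ∈ s, c j • ω j⟫_ℂ = (starRingEnd ℂ) ⟪f i, g⟫_ℂ := by
    intro i
    rw [inner_sum, hg, inner_sum, map_sum]
    apply Finset.sum_congr rfl
    intro j _
    rw [inner_smul_right, inner_smul_right, map_mul, RingHomCompTriple.comp_apply,
      RingHom.id_apply, inner_conj_symm, hinner]
  -- norm of the sum via Parseval in ℓ²
  have hnorm : ‖∑ j ∈ s, c j • ω j‖ ^ 2 = ∑' i, ‖⟪f i, g⟫_ℂ‖ ^ 2 := by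
    set x : H := ∑ j ∈ s, c j • ω j with hx
    have h1 : ‖x‖ = ‖h.repr x‖ := (h.repr.norm_map x).symm
    have h2 : ‖h.repr x‖ ^ (2 : ENNReal).toReal = ∑' i, ‖h.repr x i‖ ^ (2 : ENNReal).toReal :=
      lp.norm_rpow_eq_tsum (by norm_num) (h.repr x)
    have h3 : ∀ i, ‖h.repr x i‖ = ‖⟪f i, g⟫_ℂ‖ := by
      intro i
      rw [h.repr_apply_apply, hcoef i, RCLike.norm_conj]
    have htoReal : (2 : ENNReal).toReal = (2 : ℝ) := by norm_num
    rw [h1]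
    have : ‖h.repr x‖ ^ (2 : ℕ) = ‖h.repr x‖ ^ ((2 : ENNReal).toReal) := by
      rw [htoReal, ← Real.rpow_natCast]
      norm_num
    rw [this, h2]
    apply tsum_congr
    intro i
    rw [h3 i, htoReal, ← Real.rpow_natCast]
    norm_num
  obtain ⟨hlow, hhigh⟩ := hframe g
  rw [hgnorm] at hlow hhigh
  rw [hnorm]
  exact ⟨hlow, hhigh⟩
end

section
/- Let {f_i}_{i∈I} be a Riesz sequence in a separable Hilbert space H with Riesz bounds C, D, and let {ω_j}_{j∈I} be its R-dual of type I with respect to orthonormal bases {e_j} and {h_i}. Then {ω_j}_{j∈I} is a frame for H with frame bounds C and D. -/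
open scoped InnerProductSpace
open TopologicalSpace

lemma aux_conj_mul (z : ℂ) : (starRingEnd ℂ) z * z = ((‖z‖ ^ 2 : ℝ) : ℂ) := by
  rw [RCLike.conj_mul]; norm_cast

lemma aux_inner_self {H : Type*} [NormedAddCommGroup H] [InnerProductSpace ℂ H] (x : H) :
    ⟪x, x⟫_ℂ = ((‖x‖ ^ 2 : ℝ) : ℂ) := by
  rw [inner_self_eq_norm_sq_to_K]
  norm_cast

/-- Parseval identity for a Hilbert basis. -/
lemma aux_parseval {H I : Type*} [NormedAddCommGroup H] [InnerProductSpace ℂ H]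
    [CompleteSpace H] (b : HilbertBasis I ℂ H) (x : H) :
    HasSum (fun i => ‖⟪b i, x⟫_ℂ‖ ^ 2) (‖x‖ ^ 2) := by
  have h := b.hasSum_inner_mul_inner x x
  have h1 : (fun i => ⟪x, b i⟫_ℂ * ⟪b i, x⟫_ℂ)
      = fun i => ((‖⟪b i, x⟫_ℂ‖ ^ 2 : ℝ) : ℂ) := by
    funext i
    rw [← inner_conj_symm x (b i)]
    exact aux_conj_mul _
  rw [h1, aux_inner_self] at h
  exact Complex.hasSum_ofReal.mp h

/-- Squared norm of a finite orthonormal linear combination. -/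
lemma aux_ortho_norm_sq {H I : Type*} [NormedAddCommGroup H] [InnerProductSpace ℂ H]
    {v : I → H} (hv : Orthonormal ℂ v) (c : I → ℂ) (s : Finset I) :
    ‖∑ i ∈ s, c i • v i‖ ^ 2 = ∑ i ∈ s, ‖c i‖ ^ 2 := by
  have h1 := hv.inner_sum c c s
  rw [aux_inner_self] at h1
  have h2 : (∑ i ∈ s, (starRingEnd ℂ) (c i) * c i) = ((∑ i ∈ s, ‖c i‖ ^ 2 : ℝ) : ℂ) := by
    rw [Complex.ofReal_sum]
    exact Finset.sum_congr rfl fun i _ => aux_conj_mul (c i)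
  rw [h2] at h1
  exact_mod_cast h1

/-- Summability of `∑ c i • f i` given an upper Riesz-type bound. -/
lemma aux_summable_smul {H I : Type*} [NormedAddCommGroup H] [InnerProductSpace ℂ H]
    [CompleteSpace H] (f : I → H) (D : ℝ)
    (hD : ∀ (s : Finset I) (c : I → ℂ), ‖∑ i ∈ s, c i • f i‖ ^ 2 ≤ D * ∑ i ∈ s, ‖c i‖ ^ 2)
    (c : I → ℂ) (hc : Summable fun i => ‖c i‖ ^ 2) :
    Summable fun i => c i • f i := by
  set E : ℝ := |D| + 1 with hE
  have hE0 : 0 < E := by positivity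
  rw [summable_iff_vanishing_norm]
  intro ε hε
  obtain ⟨s, hs⟩ := summable_iff_vanishing_norm.mp hc (ε ^ 2 / E) (by positivity)
  refine ⟨s, fun t ht => ?_⟩
  have h1 := hs t ht
  have h2 : ∑ i ∈ t, ‖c i‖ ^ 2 < ε ^ 2 / E := by
    refine lt_of_le_of_lt (le_abs_self _) ?_
    simpa [Real.norm_eq_abs] using h1
  have hsum0 : (0:ℝ) ≤ ∑ i ∈ t, ‖c i‖ ^ 2 :=
    Finset.sum_nonneg fun i _ => by positivity
  have h3 : ‖∑ i ∈ t, c i • f i‖ ^ 2 ≤ E * ∑ i ∈ t, ‖c i‖ ^ 2 := by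
    refine le_trans (hD t c) ?_
    nlinarith [le_abs_self D]
  have h4 : ‖∑ i ∈ t, c i • f i‖ ^ 2 < ε ^ 2 := by
    calc ‖∑ i ∈ t, c i • f i‖ ^ 2 ≤ E * ∑ i ∈ t, ‖c i‖ ^ 2 := h3
    _ < E * (ε ^ 2 / E) := (mul_lt_mul_iff_right₀ hE0).mpr h2
    _ = ε ^ 2 := by field_simp
  nlinarith [norm_nonneg (∑ i ∈ t, c i • f i)]

/-- If `{f i}` is a Riesz sequence with bounds `C, D` and
`ω j = ∑ᵢ ⟨f i, e j⟩ h i` is its R-dual of type I, then `{ω j}` is a frame for `H`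
with bounds `C` and `D`. -/
theorem stmt6 {H : Type*} {I : Type*} [NormedAddCommGroup H] [InnerProductSpace ℂ H]
    [CompleteSpace H] [SeparableSpace H] [Countable I]
    (e h : HilbertBasis I ℂ H) (f ω : I → H) (C D : ℝ) (hC : 0 < C)
    (hRiesz : ∀ (s : Finset I) (c : I → ℂ),
      C * ∑ i ∈ s, ‖c i‖ ^ 2 ≤ ‖∑ i ∈ s, c i • f i‖ ^ 2 ∧
      ‖∑ i ∈ s, c i • f i‖ ^ 2 ≤ D * ∑ i ∈ s, ‖c i‖ ^ 2)
    (hω : ∀ j, ω j = ∑' i, ⟪e j, f i⟫_ℂ • h i) :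
    ∀ g : H, (Summable fun j => ‖⟪ω j, g⟫_ℂ‖ ^ 2) ∧
      C * ‖g‖ ^ 2 ≤ ∑' j, ‖⟪ω j, g⟫_ℂ‖ ^ 2 ∧
      ∑' j, ‖⟪ω j, g⟫_ℂ‖ ^ 2 ≤ D * ‖g‖ ^ 2 := by
  intro g
  have hDup : ∀ (s : Finset I) (c : I → ℂ),
      ‖∑ i ∈ s, c i • f i‖ ^ 2 ≤ D * ∑ i ∈ s, ‖c i‖ ^ 2 := fun s c => (hRiesz s c).2
  have hOrth : ∀ (s : Finset I) (c : I → ℂ),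
      ‖∑ i ∈ s, c i • (h i : H)‖ ^ 2 ≤ 1 * ∑ i ∈ s, ‖c i‖ ^ 2 := by
    intro s c
    rw [aux_ortho_norm_sq h.orthonormal c s, one_mul]
  -- coefficients of g in basis h
  set d : I → ℂ := fun i => ⟪g, h i⟫_ℂ with hd_def
  have hcg : HasSum (fun i => ‖d i‖ ^ 2) (‖g‖ ^ 2) := by
    have hp := aux_parseval h g
    have he : (fun i => ‖d i‖ ^ 2) = fun i => ‖⟪h i, g⟫_ℂ‖ ^ 2 := by
      funext i; simp only [hd_def]; rw [norm_inner_symm]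
    rw [he]; exact hp
  have hd : Summable fun i => ‖d i‖ ^ 2 := hcg.summable
  -- the synthesis vector F
  have hdf : Summable fun i => d i • f i := aux_summable_smul f D hDup d hd
  set F : H := ∑' i, d i • f i with hF_def
  have hFsum : HasSum (fun i => d i • f i) F := hdf.hasSum
  -- key: ‖⟪ω j, g⟫‖ = ‖⟪e j, F⟫‖
  have key : ∀ j, ‖⟪ω j, g⟫_ℂ‖ = ‖⟪e j, F⟫_ℂ‖ := by
    intro j
    have hb : Summable fun i => ‖⟪e j, f i⟫_ℂ‖ ^ 2 := by
      refine summable_of_sum_le (c := |D| + 1) (fun i => by positivity) fun u => ?_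
      set T : ℝ := ∑ i ∈ u, ‖⟪e j, f i⟫_ℂ‖ ^ 2 with hT
      have hT0 : 0 ≤ T := Finset.sum_nonneg fun i _ => by positivity
      have h1 : ⟪∑ i ∈ u, ⟪f i, e j⟫_ℂ • f i, e j⟫_ℂ = ((T : ℝ) : ℂ) := by
        rw [sum_inner, hT, Complex.ofReal_sum]
        refine Finset.sum_congr rfl fun i _ => ?_
        rw [inner_smul_left, aux_conj_mul]
        norm_cast
        rw [norm_inner_symm]
      have h2 := norm_inner_le_norm (𝕜 := ℂ) (∑ i ∈ u, ⟪f i, e j⟫_ℂ • f i) (e j)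
      rw [h1] at h2
      have hej : ‖(e j : H)‖ = 1 := e.orthonormal.1 j
      rw [Complex.norm_real, hej, mul_one, Real.norm_eq_abs, abs_of_nonneg hT0] at h2
      have h3 := hDup u (fun i => ⟪f i, e j⟫_ℂ)
      have h4 : ∑ i ∈ u, ‖⟪f i, e j⟫_ℂ‖ ^ 2 = T := by
        rw [hT]
        exact Finset.sum_congr rfl fun i _ => by rw [norm_inner_symm]
      rw [h4] at h3
      nlinarith [pow_le_pow_left₀ hT0 h2 2, le_abs_self D, abs_nonneg D,
        norm_nonneg (∑ i ∈ u, ⟪f i, e j⟫_ℂ • f i)]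
    have hωs : Summable fun i => ⟪e j, f i⟫_ℂ • (h i : H) :=
      aux_summable_smul (fun i => (h i : H)) 1 hOrth _ hb
    have e1 : ⟪g, ω j⟫_ℂ = ∑' i, ⟪g, h i⟫_ℂ * ⟪e j, f i⟫_ℂ := by
      rw [hω j]
      have hm := (innerSL ℂ g).map_tsum hωs
      simp only [innerSL_apply_apply, inner_smul_right] at hm
      rw [hm]
      exact tsum_congr fun i => mul_comm _ _
    have e2 : ⟪e j, F⟫_ℂ = ∑' i, ⟪g, h i⟫_ℂ * ⟪e j, f i⟫_ℂ := by
      have hm := (innerSL ℂ (e j : H)).map_tsum hdf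
      simp only [innerSL_apply_apply, inner_smul_right] at hm
      rw [hF_def, hm]
    rw [norm_inner_symm, e1, ← e2]
  -- Parseval for F in basis e
  have hP : HasSum (fun j => ‖⟪ω j, g⟫_ℂ‖ ^ 2) (‖F‖ ^ 2) := by
    have hpe := aux_parseval e F
    have he : (fun j => ‖⟪ω j, g⟫_ℂ‖ ^ 2) = fun j => ‖⟪e j, F⟫_ℂ‖ ^ 2 := by
      funext j; rw [key j]
    rw [he]; exact hpe
  have hFt : Filter.Tendsto (fun s : Finset I => ∑ i ∈ s, d i • f i)
      Filter.atTop (nhds F) := hFsum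
  have hct : Filter.Tendsto (fun s : Finset I => ∑ i ∈ s, ‖d i‖ ^ 2)
      Filter.atTop (nhds (‖g‖ ^ 2)) := hcg
  have hcont : Continuous (fun x : H => ‖x‖ ^ 2) := by fun_prop
  have t2 : Filter.Tendsto (fun s : Finset I => ‖∑ i ∈ s, d i • f i‖ ^ 2)
      Filter.atTop (nhds (‖F‖ ^ 2)) := (hcont.tendsto F).comp hFt
  have hlow : C * ‖g‖ ^ 2 ≤ ‖F‖ ^ 2 :=
    le_of_tendsto_of_tendsto' (hct.const_mul C) t2 fun s => (hRiesz s d).1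
  have hupp : ‖F‖ ^ 2 ≤ D * ‖g‖ ^ 2 :=
    le_of_tendsto_of_tendsto' t2 (hct.const_mul D) fun s => (hRiesz s d).2
  refine ⟨hP.summable, ?_, ?_⟩
  · rw [hP.tsum_eq]; exact hlow
  · rw [hP.tsum_eq]; exact hupp
end

section
/- Let {f_i}_{i∈I} be a frame for a separable Hilbert space H with frame operator S_f, let {e_j}, {h_i} be orthonormal bases of H, and let Q: H → H be a bounded bijective operator with ‖Q‖ ≤ √‖S_f‖ and ‖Q⁻¹‖ ≤ √‖S_f⁻¹‖. Define the R-dual of type III by ω_j = Σ_i ⟨S_f^{-1/2} f_i, e_j⟩ Q h_i. Then f_i = Σ_j ⟨ω_j, (Q*)⁻¹ h_i⟩ S_f^{1/2} e_j for every i ∈ I. -/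
open scoped InnerProductSpace
open TopologicalSpace

/-- Let `{f i}` be a frame with frame operator `Sf` (positive square root
`Sfhalf`, inverse square root `Sfinvhalf`, inverse `Sfinv`), and let `Q` be a bounded
bijective operator (inverse `Qinv`) with `‖Q‖ ≤ √‖Sf‖`, `‖Q⁻¹‖ ≤ √‖Sf⁻¹‖`.  If
`ω j = ∑ᵢ ⟨Sf^{-1/2} f i, e j⟩ Q (h i)` is the R-dual of type III, then
`f i = ∑ⱼ ⟨ω j, (Q*)⁻¹ h i⟩ Sf^{1/2} (e j)` for every `i` (where `(Q*)⁻¹ = (Q⁻¹)*`). -/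
theorem stmt7 {H : Type*} {I : Type*} [NormedAddCommGroup H] [InnerProductSpace ℂ H]
    [CompleteSpace H] [SeparableSpace H] [Countable I]
    (e h : HilbertBasis I ℂ H) (f : I → H) (A B : ℝ) (hA : 0 < A)
    (hsum : ∀ g : H, Summable fun i => ‖⟪f i, g⟫_ℂ‖ ^ 2)
    (hframe : ∀ g : H, A * ‖g‖ ^ 2 ≤ ∑' i, ‖⟪f i, g⟫_ℂ‖ ^ 2 ∧
      ∑' i, ‖⟪f i, g⟫_ℂ‖ ^ 2 ≤ B * ‖g‖ ^ 2)
    (Sf Sfhalf Sfinvhalf Sfinv Q Qinv : H →L[ℂ] H)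
    (hSf : ∀ g, Sf g = ∑' i, ⟪f i, g⟫_ℂ • f i)
    (hpos : Sfhalf.IsPositive) (hsq : Sfhalf ∘L Sfhalf = Sf)
    (hinv1 : Sfhalf ∘L Sfinvhalf = 1) (hinv2 : Sfinvhalf ∘L Sfhalf = 1)
    (hSinv1 : Sf ∘L Sfinv = 1) (hSinv2 : Sfinv ∘L Sf = 1)
    (hQ1 : Q ∘L Qinv = 1) (hQ2 : Qinv ∘L Q = 1)
    (hQnorm : ‖Q‖ ≤ Real.sqrt ‖Sf‖) (hQinvnorm : ‖Qinv‖ ≤ Real.sqrt ‖Sfinv‖)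
    (ω : I → H)
    (hω : ∀ j, ω j = ∑' i, ⟪e j, Sfinvhalf (f i)⟫_ℂ • Q (h i)) :
    ∀ i, f i = ∑' j, ⟪ContinuousLinearMap.adjoint Qinv (h i), ω j⟫_ℂ • Sfhalf (e j) := by
  intro i
  -- Sfhalf is self-adjoint
  have hsaH : ContinuousLinearMap.adjoint Sfhalf = Sfhalf := hpos.isSelfAdjoint
  -- Sfinvhalf is self-adjoint
  have hsaInv : ContinuousLinearMap.adjoint Sfinvhalf = Sfinvhalf := by
    have h1 : ContinuousLinearMap.adjoint Sfinvhalf ∘L Sfhalf = 1 := by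
      have h0 := congrArg ContinuousLinearMap.adjoint hinv1
      rw [ContinuousLinearMap.adjoint_comp, hsaH] at h0
      rw [h0, ← ContinuousLinearMap.star_eq_adjoint, star_one]
    calc ContinuousLinearMap.adjoint Sfinvhalf
        = ContinuousLinearMap.adjoint Sfinvhalf ∘L (Sfhalf ∘L Sfinvhalf) := by
          rw [hinv1]; ext x; simp
      _ = (ContinuousLinearMap.adjoint Sfinvhalf ∘L Sfhalf) ∘L Sfinvhalf := by
          rw [ContinuousLinearMap.comp_assoc]
      _ = Sfinvhalf := by rw [h1]; ext x; simp
  -- key: the inner products equal e-coefficients of Sfinvhalf (f i)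
  have key : ∀ j, ⟪ContinuousLinearMap.adjoint Qinv (h i), ω j⟫_ℂ
      = ⟪e j, Sfinvhalf (f i)⟫_ℂ := by
    intro j
    set c : I → ℂ := fun k => ⟪e j, Sfinvhalf (f k)⟫_ℂ with hc
    have hcnorm : ∀ k, ‖c k‖ = ‖⟪f k, Sfinvhalf (e j)⟫_ℂ‖ := by
      intro k
      have : c k = ⟪ContinuousLinearMap.adjoint Sfinvhalf (e j), f k⟫_ℂ := by
        rw [ContinuousLinearMap.adjoint_inner_left]
      rw [this, hsaInv, norm_inner_symm]
    have hmem : Memℓp c 2 := by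
      apply memℓp_gen
      have h2 : (2 : ENNReal).toReal = 2 := by norm_num
      rw [h2]
      have hs := hsum (Sfinvhalf (e j))
      apply hs.congr
      intro k
      rw [hcnorm k, Real.rpow_two]
    let F : lp (fun _ : I => ℂ) 2 := ⟨c, hmem⟩
    have hhs : HasSum (fun k => F k • h k) (h.repr.symm F) := h.hasSum_repr_symm F
    have hFapp : ∀ k, F k = c k := fun k => rfl
    have hωQ : ω j = Q (h.repr.symm F) := by
      rw [hω j, ← (Q.hasSum hhs).tsum_eq]
      exact tsum_congr fun k => by rw [map_smul, hFapp]
    have hQinvω : Qinv (ω j) = h.repr.symm F := by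
      rw [hωQ, ← ContinuousLinearMap.comp_apply, hQ2, ContinuousLinearMap.one_apply]
    rw [ContinuousLinearMap.adjoint_inner_left, hQinvω]
    rw [← h.repr_apply_apply, LinearIsometryEquiv.apply_symm_apply]
  rw [tsum_congr fun j => by rw [key j]]
  -- now f i = ∑' j, ⟪e j, Sfinvhalf (f i)⟫ • Sfhalf (e j)
  set g := Sfinvhalf (f i) with hg
  have hrepr : HasSum (fun j => e.repr g j • e j) g := e.hasSum_repr g
  have hmap : HasSum (fun j => ⟪e j, g⟫_ℂ • Sfhalf (e j)) (Sfhalf g) := by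
    have h1 := Sfhalf.hasSum hrepr
    simpa [e.repr_apply_apply, map_smul] using h1
  have hfi : Sfhalf g = f i := by
    rw [hg, ← ContinuousLinearMap.comp_apply, hinv1, ContinuousLinearMap.one_apply]
  rw [← hfi]
  exact hmap.tsum_eq.symm
end

section
/- Let {f_i}_{i∈I} be a frame for H with frame operator S_f, let {e_j}, {h_i} be orthonormal bases, and suppose {ω_j}_{j∈I} is the symmetrical R-dual of type III of {f_i}, i.e., ω_j = Σ_i ⟨S_f^{-1/2} f_i, e_j⟩ S̃_ω^{1/2} h_i, where S̃_ω^{1/2} is the bounded bijective self-adjoint extension to H of the square root of the frame operator S_ω of the Riesz sequence {ω_j}. Then f_i = Σ_j ⟨S̃_ω^{-1/2} ω_j, h_i⟩ S_f^{1/2} e_j for every i ∈ I; that is, {f_i} is the symmetrical R-dual of type III of {ω_j} with respect to the triple ({h_i}, {e_j}, S_f^{1/2}). -/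
open scoped InnerProductSpace
open TopologicalSpace

private lemma hasSum_aux {H : Type*} {I : Type*} [NormedAddCommGroup H]
    [InnerProductSpace ℂ H] [CompleteSpace H] (b : HilbertBasis I ℂ H) (c : I → ℂ)
    (hc : Summable fun i => ‖c i‖ ^ 2) :
    ∃ x : H, HasSum (fun i => c i • b i) x ∧ ∀ i, ⟪b i, x⟫_ℂ = c i := by
  have hc' : Memℓp c 2 := by
    apply memℓp_gen
    have h2 : (2 : ENNReal).toReal = ((2:ℕ):ℝ) := by norm_num
    rw [h2]
    simpa [Real.rpow_natCast] using hc
  refine ⟨b.repr.symm ⟨c, hc'⟩, ?_, ?_⟩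
  · have := b.hasSum_repr (b.repr.symm ⟨c, hc'⟩)
    simpa using this
  · intro i
    rw [← b.repr_apply_apply]
    simp

/-- Let `{f i}` be a frame with frame operator `Sf` (square root `Sfhalf`,
inverse square root `Sfinvhalf`), and let `{ω j}` be the symmetrical R-dual of type III:
`ω j = ∑ᵢ ⟨Sf^{-1/2} f i, e j⟩ S̃ω^{1/2} (h i)`, where `E = S̃ω^{1/2}` is the bounded
bijective self-adjoint extension to `H` (inverse `E' = S̃ω^{-1/2}`) of the positive square
root `Sωhalf` of the frame operator `Sω` of the Riesz sequence `{ω j}` on its closed span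
`W`, given by `E(x₁+x₂) = Sωhalf x₁ + ‖Sωhalf⁻¹‖⁻¹ x₂` for `x₁ ∈ W`, `x₂ ∈ W⊥`.
Then `f i = ∑ⱼ ⟨S̃ω^{-1/2} ω j, h i⟩ Sf^{1/2} (e j)` for every `i`, i.e. `{f i}` is the
symmetrical R-dual of type III of `{ω j}` w.r.t. the triple `({h i}, {e j}, Sf^{1/2})`. -/
theorem stmt11 {H : Type*} {I : Type*} [NormedAddCommGroup H] [InnerProductSpace ℂ H]
    [CompleteSpace H] [SeparableSpace H] [Countable I]
    (e h : HilbertBasis I ℂ H) (f ω : I → H) (A B : ℝ) (hA : 0 < A)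
    (hsum : ∀ g : H, Summable fun i => ‖⟪f i, g⟫_ℂ‖ ^ 2)
    (hframe : ∀ g : H, A * ‖g‖ ^ 2 ≤ ∑' i, ‖⟪f i, g⟫_ℂ‖ ^ 2 ∧
      ∑' i, ‖⟪f i, g⟫_ℂ‖ ^ 2 ≤ B * ‖g‖ ^ 2)
    (Sf Sfhalf Sfinvhalf : H →L[ℂ] H)
    (hSf : ∀ g, Sf g = ∑' i, ⟪f i, g⟫_ℂ • f i)
    (hfpos : Sfhalf.IsPositive) (hfsq : Sfhalf ∘L Sfhalf = Sf)
    (hf1 : Sfhalf ∘L Sfinvhalf = 1) (hf2 : Sfinvhalf ∘L Sfhalf = 1)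
    (W : Submodule ℂ H) [CompleteSpace W]
    (hWdef : W = (Submodule.span ℂ (Set.range ω)).topologicalClosure)
    (hmem : ∀ j, ω j ∈ W)
    (Sω Sωhalf Sωinvhalf : W →L[ℂ] W)
    (hSω : ∀ g : W, Sω g = ∑' j, ⟪(⟨ω j, hmem j⟩ : W), g⟫_ℂ • (⟨ω j, hmem j⟩ : W))
    (hωpos : Sωhalf.IsPositive) (hωsq : Sωhalf ∘L Sωhalf = Sω)
    (hω1 : Sωhalf ∘L Sωinvhalf = 1) (hω2 : Sωinvhalf ∘L Sωhalf = 1)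
    (E E' : H →L[ℂ] H)
    (hE : ∀ (x₁ : W) (x₂ : Wᗮ),
      E (↑x₁ + ↑x₂) = (Sωhalf x₁ : H) + (‖Sωinvhalf‖⁻¹ : ℝ) • (x₂ : H))
    (hEsa : IsSelfAdjoint E)
    (hE1 : E ∘L E' = 1) (hE2 : E' ∘L E = 1)
    (hωdef : ∀ j, ω j = ∑' i, ⟪e j, Sfinvhalf (f i)⟫_ℂ • E (h i)) :
    ∀ i, f i = ∑' j, ⟪h i, E' (ω j)⟫_ℂ • Sfhalf (e j) := by
  intro i0
  -- coefficients
  set c : I → I → ℂ := fun j i => ⟪e j, Sfinvhalf (f i)⟫_ℂ with hc_def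
  have hcs : ∀ j, Summable fun i => ‖c j i‖ ^ 2 := by
    intro j
    have := hsum ((ContinuousLinearMap.adjoint Sfinvhalf) (e j))
    refine this.congr fun i => ?_
    have h1 : ⟪f i, (ContinuousLinearMap.adjoint Sfinvhalf) (e j)⟫_ℂ
        = ⟪Sfinvhalf (f i), e j⟫_ℂ := ContinuousLinearMap.adjoint_inner_right _ _ _
    rw [h1, hc_def]
    simp [norm_inner_symm]
  choose x hx hxi using fun j => hasSum_aux h (c j) (hcs j)
  have hEx : ∀ j, ω j = E (x j) := by
    intro j
    have h2 : HasSum (fun i => c j i • E (h i)) (E (x j)) := by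
      have := (hx j).mapL E
      simpa using this
    rw [hωdef j, h2.tsum_eq]
  have hE'x : ∀ j, E' (ω j) = x j := by
    intro j
    rw [hEx j, ← ContinuousLinearMap.comp_apply, hE2, ContinuousLinearMap.one_apply]
  have hinner : ∀ j, ⟪h i0, E' (ω j)⟫_ℂ = ⟪e j, Sfinvhalf (f i0)⟫_ℂ := by
    intro j
    rw [hE'x j, hxi j i0]
  -- right side sum
  set y := Sfinvhalf (f i0) with hy
  have hrep : ∀ j, ⟪e j, y⟫_ℂ = e.repr y j := by
    intro j; rw [e.repr_apply_apply]
  have hsum2 : HasSum (fun j => ⟪h i0, E' (ω j)⟫_ℂ • Sfhalf (e j)) (f i0) := by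
    have h3 : HasSum (fun j => e.repr y j • e j) y := e.hasSum_repr y
    have h4 := h3.mapL Sfhalf
    have h5 : Sfhalf y = f i0 := by
      rw [hy, ← ContinuousLinearMap.comp_apply, hf1, ContinuousLinearMap.one_apply]
    rw [h5] at h4
    refine HasSum.congr_fun (by simpa using h4) fun j => ?_
    rw [hinner j, hrep j]
  exact hsum2.tsum_eq.symm
end

section
/- Let {f_i}_{i∈I} be a frame for H and {ω_j}_{j∈I} a Riesz sequence in H such that {ω_j} is an R-dual of type I of {f_i} with respect to some orthonormal bases {e_j}, {h_i}. Then dim(ker T) = dim((span{ω_j})⊥), where T is the synthesis operator of {f_i}. -/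
/-!
Let `Φ c = ∑ conj (c i) • h i`, a conjugate-linear isometry of `ℓ²` onto `H`. Since `T†` is the
analysis operator `g ↦ (⟪f i, g⟫)ᵢ`, the R-dual relation reads `ω j = Φ (T† (e j))`, hence
`⟪ω j, Φ c⟫ = ⟪T c, e j⟫` and `Φ` maps `ker T` onto `(span ω)ᗮ`. A conjugate-linear isometric
equivalence carries a Hilbert basis to a Hilbert basis, so the two spaces are also linearly
isometric.
-/

open scoped InnerProductSpace
open TopologicalSpace
open scoped InnerProduct lp
open Submodule

section ConjLinear

variable {𝕜 ι V W : Type*} [RCLike 𝕜] [NormedAddCommGroup V] [InnerProductSpace 𝕜 V]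
  [NormedAddCommGroup W] [InnerProductSpace 𝕜 W]

open RCLike in
theorem LinearIsometry.inner_map_map_of_conj (Φ : V →ₗᵢ⋆[𝕜] W) (x y : V) :
    ⟪Φ x, Φ y⟫_𝕜 = starRingEnd 𝕜 ⟪x, y⟫_𝕜 := by
  have hI : (I : 𝕜) • Φ y = -Φ ((I : 𝕜) • y) := by
    rw [Φ.map_smulₛₗ, conj_I, neg_smul, neg_neg]
  rw [inner_eq_sum_norm_sq_div_four, inner_eq_sum_norm_sq_div_four (𝕜 := 𝕜) x y, hI,
    sub_neg_eq_add, ← sub_eq_add_neg (Φ x), ← map_add, ← map_sub, ← map_add, ← map_sub,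
    Φ.norm_map, Φ.norm_map, Φ.norm_map, Φ.norm_map]
  simp only [map_div₀, map_add, map_sub, map_mul, map_pow, conj_ofReal, conj_I, map_ofNat]
  ring

theorem LinearIsometryEquiv.inner_map_map_of_conj (Φ : V ≃ₗᵢ⋆[𝕜] W) (x y : V) :
    ⟪Φ x, Φ y⟫_𝕜 = starRingEnd 𝕜 ⟪x, y⟫_𝕜 :=
  Φ.toLinearIsometry.inner_map_map_of_conj x y

theorem Submodule.mem_orthogonal_span_range_iff {v : ι → V} {x : V} :
    x ∈ (span 𝕜 (Set.range v))ᗮ ↔ ∀ i, ⟪v i, x⟫_𝕜 = 0 := by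
  rw [← span_singleton_le_iff_mem, ← isOrtho_iff_le, isOrtho_comm, isOrtho_span]
  simp

theorem HilbertBasis.forall_inner_eq_zero_iff (b : HilbertBasis ι 𝕜 V) {x : V} :
    (∀ i, ⟪b i, x⟫_𝕜 = 0) ↔ x = 0 := by
  refine ⟨fun hx => b.repr.map_eq_zero_iff.1 (lp.ext (funext fun i => ?_)),
    fun hx i => by simp [hx]⟩
  simpa [b.repr_apply_apply] using hx i

theorem LinearIsometryEquiv.nonempty_linearIsometryEquiv_of_conj [CompleteSpace V]
    (Φ : V ≃ₗᵢ⋆[𝕜] W) : Nonempty (V ≃ₗᵢ[𝕜] W) := by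
  classical
  have : CompleteSpace W := Φ.toIsometryEquiv.completeSpace_iff.1 ‹_›
  obtain ⟨w, b, -⟩ := exists_hilbertBasis 𝕜 V
  have hon : Orthonormal 𝕜 (Φ ∘ b) := orthonormal_iff_ite.2 fun i j => by
    simp [Φ.inner_map_map_of_conj, orthonormal_iff_ite.1 b.orthonormal, apply_ite]
  have hsp : (span 𝕜 (Set.range (Φ ∘ b)))ᗮ = ⊥ := by
    refine eq_bot_iff.2 fun x hx => ?_
    rw [mem_orthogonal_span_range_iff] at hx
    have : Φ.symm x = 0 := b.forall_inner_eq_zero_iff.1 fun i => by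
      rw [← _root_.map_eq_zero (starRingEnd 𝕜), ← Φ.inner_map_map_of_conj, apply_symm_apply]
      exact hx i
    simpa using this
  exact ⟨b.repr.trans (HilbertBasis.mkOfOrthogonalEqBot hon hsp).repr.symm⟩

end ConjLinear

section Synthesis

variable {𝕜 ι H : Type*} [RCLike 𝕜] [NormedAddCommGroup H] [InnerProductSpace 𝕜 H]
  {T : ℓ²(ι, 𝕜) →L[𝕜] H} {f : ι → H}

theorem synthesis_apply_single [DecidableEq ι] (hT : ∀ c, T c = ∑' i, c i • f i) (i : ι)
    (a : 𝕜) : T (lp.single 2 i a) = a • f i := by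
  rw [hT, tsum_eq_single i fun k hk => by simp [hk], lp.single_apply_self]

theorem synthesis_adjoint_apply [CompleteSpace H] (hT : ∀ c, T c = ∑' i, c i • f i) (g : H)
    (i : ι) : (T†) g i = ⟪f i, g⟫_𝕜 := by
  classical
  rw [← one_smul 𝕜 (f i), ← synthesis_apply_single hT, ← ContinuousLinearMap.adjoint_inner_right,
    lp.inner_single_left]
  simp

theorem tsum_inner_smul_eq_repr_symm_star_adjoint [CompleteSpace H]
    (hT : ∀ c, T c = ∑' i, c i • f i) (h : HilbertBasis ι 𝕜 H) (g : H) :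
    ∑' i, ⟪g, f i⟫_𝕜 • h i = ((starₗᵢ 𝕜).trans h.repr.symm) ((T†) g) := by
  rw [LinearIsometryEquiv.trans_apply, ← (h.hasSum_repr_symm _).tsum_eq]
  simp [synthesis_adjoint_apply hT]

end Synthesis

theorem stmt13_general {H : Type*} {I : Type*} [NormedAddCommGroup H] [InnerProductSpace ℂ H]
    [CompleteSpace H]
    (e h : HilbertBasis I ℂ H) (f ω : I → H)
    (T : lp (fun _ : I => ℂ) 2 →L[ℂ] H)
    (hT : ∀ c, T c = ∑' i, c i • f i)
    (hω : ∀ j, ω j = ∑' i, ⟪e j, f i⟫_ℂ • h i) :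
    Nonempty (↥(LinearMap.ker (T : lp (fun _ : I => ℂ) 2 →ₗ[ℂ] H)) ≃ₗᵢ[ℂ] ↥(Submodule.span ℂ (Set.range ω))ᗮ) := by
  set Φ : ℓ²(I, ℂ) ≃ₗᵢ⋆[ℂ] H := (starₗᵢ ℂ).trans h.repr.symm
  have hωΦ : ∀ j, ω j = Φ ((T†) (e j)) := fun j =>
    (hω j).trans (tsum_inner_smul_eq_repr_symm_star_adjoint hT h _)
  have hmem : ∀ c, Φ c ∈ (span ℂ (Set.range ω))ᗮ ↔ T c = 0 := fun c => by
    simp_rw [mem_orthogonal_span_range_iff, hωΦ, Φ.inner_map_map_of_conj,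
      ContinuousLinearMap.adjoint_inner_left, map_eq_zero, e.forall_inner_eq_zero_iff]
  have hmap : (LinearMap.ker (T : ℓ²(I, ℂ) →ₗ[ℂ] H)).map (Φ : ℓ²(I, ℂ) →ₗ⋆[ℂ] H) =
      (span ℂ (Set.range ω))ᗮ := by
    ext y
    simpa [mem_map_equiv] using (hmem (Φ.symm y)).symm
  exact LinearIsometryEquiv.nonempty_linearIsometryEquiv_of_conj
    ((Φ.submoduleMap _).trans (LinearIsometryEquiv.ofEq _ _ hmap))

/-- If `{f i}` is a frame with synthesis operator `T` and `{ω j}` is a Riesz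
sequence which is an R-dual of type I of `{f i}` (w.r.t. orthonormal bases `{e j}`,
`{h i}`), then `dim (ker T) = dim ((span {ω j})⊥)`: the two Hilbert spaces are
isometrically isomorphic. -/
theorem stmt13 {H : Type*} {I : Type*} [NormedAddCommGroup H] [InnerProductSpace ℂ H]
    [CompleteSpace H] [SeparableSpace H] [Countable I]
    (e h : HilbertBasis I ℂ H) (f ω : I → H) (A B C D : ℝ) (hA : 0 < A) (hC : 0 < C)
    (hsum : ∀ g : H, Summable fun i => ‖⟪f i, g⟫_ℂ‖ ^ 2)
    (hframe : ∀ g : H, A * ‖g‖ ^ 2 ≤ ∑' i, ‖⟪f i, g⟫_ℂ‖ ^ 2 ∧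
      ∑' i, ‖⟪f i, g⟫_ℂ‖ ^ 2 ≤ B * ‖g‖ ^ 2)
    (hRiesz : ∀ (s : Finset I) (c : I → ℂ),
      C * ∑ j ∈ s, ‖c j‖ ^ 2 ≤ ‖∑ j ∈ s, c j • ω j‖ ^ 2 ∧
      ‖∑ j ∈ s, c j • ω j‖ ^ 2 ≤ D * ∑ j ∈ s, ‖c j‖ ^ 2)
    (T : lp (fun _ : I => ℂ) 2 →L[ℂ] H)
    (hT : ∀ c, T c = ∑' i, c i • f i)
    (hω : ∀ j, ω j = ∑' i, ⟪e j, f i⟫_ℂ • h i) :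
    Nonempty (↥(LinearMap.ker (T : lp (fun _ : I => ℂ) 2 →ₗ[ℂ] H)) ≃ₗᵢ[ℂ] ↥(Submodule.span ℂ (Set.range ω))ᗮ) :=
  stmt13_general e h f ω T hT hω
end
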